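/- In a monotonous quiver, phylogeneticity is anti-hereditary: if B is a phylogenetic vertex and A is an ancestor of B (i.e. A ≤ B), then A is phylogenetic. -/

import Mathlib

/-!
An edge raises the height by at most one, so along a short full evolution `U` the `k`-th vertex
has height exactly `k`; a universal evolution of `B` is short. In a monotonous quiver heights never
decrease along an evolution. Prolong a full evolution `E` of `A` by an evolution from `A` to `B`:
`U` embeds in the result, and its vertices of height `< h(A)` must land inside `E`. Hence
`U 0, …, U (h(A) - 1), A` embeds in every full evolution of `A`. Embedding it in a short full
evolution `T` of `A`, which has the same length, matches it with `T` term by term, so `T` itself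
embeds in every full evolution of `A`.
-/

universe u
variable {V : Type u} [Quiver V]

/-- An evolution of length `m` with vertex sequence `A 0, A 1, ..., A m`:
for each `k < m` there is an edge from `A (k+1)` to `A k`
(the paper's evolution `A 0 ← A 1 ← ⋯ ← A m`). -/
def IsEvol (A : ℕ → V) (m : ℕ) : Prop := ∀ k < m, Nonempty (A (k + 1) ⟶ A k)

/-- `Anc X Y` : `X` is an ancestor of `Y`, i.e. there is an evolution from `X` to `Y`. -/
def Anc (X Y : V) : Prop := ∃ (m : ℕ) (A : ℕ → V), IsEvol A m ∧ A 0 = X ∧ A m = Y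

/-- `X` and `Y` are isotypic. -/
def Isotypic (X Y : V) : Prop := Anc X Y ∧ Anc Y X

/-- A vertex is primitive if every ancestor of it is isotypic to it. -/
def Primitive (X : V) : Prop := ∀ B : V, Anc B X → Anc X B

/-- A full evolution for `X` : an evolution from a primitive vertex to `X`. -/
def IsFullEvol (A : ℕ → V) (m : ℕ) (X : V) : Prop :=
  IsEvol A m ∧ Primitive (A 0) ∧ A m = X

/-- The height of a vertex: the least length of a full evolution for it (`⊤` if none). -/
noncomputable def height (X : V) : ℕ∞ :=
  sInf {n : ℕ∞ | ∃ m : ℕ, n = (m : ℕ∞) ∧ ∃ A : ℕ → V, IsFullEvol A m X}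

/-- `A` is a critical ancestor of `B`. -/
def CritAnc (A B : V) : Prop :=
  height A < ⊤ ∧ ∃ (m : ℕ) (E : ℕ → V), 0 < m ∧ IsEvol E m ∧ E 0 = A ∧ E m = B ∧
    height (E 1) = height A + 1

/-- A vertex is normal if any two of its critical ancestors of equal height are isotypic. -/
def NormalVtx (B : V) : Prop :=
  ∀ A A' : V, CritAnc A B → CritAnc A' B → height A = height A' → Isotypic A A'

/-- The evolution `(A, m)` embeds in the evolution `(B, n)`. -/
def Embeds (A : ℕ → V) (m : ℕ) (B : ℕ → V) (n : ℕ) : Prop :=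
  m ≤ n ∧ ∃ r : ℕ → ℕ, (∀ k < m, r k < r (k + 1)) ∧ r m ≤ n ∧
    ∀ k ≤ m, Isotypic (A k) (B (r k))

/-- A universal evolution for `X`: a full evolution for `X` embedding in every
full evolution for `X`. -/
def IsUniversalEvol (A : ℕ → V) (m : ℕ) (X : V) : Prop :=
  IsFullEvol A m X ∧ ∀ (B : ℕ → V) (n : ℕ), IsFullEvol B n X → Embeds A m B n

/-- A vertex is phylogenetic if it admits a universal evolution. -/
def Phylogenetic (X : V) : Prop := ∃ (A : ℕ → V) (m : ℕ), IsUniversalEvol A m X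

/-- A quiver is monotonous if `h(A) ≥ h(B)` for every edge `A → B`. -/
def Monotonous (V : Type u) [Quiver V] : Prop :=
  ∀ A B : V, Nonempty (A ⟶ B) → height B ≤ height A

/-- A vertex `A` is regular if for every descendant `B` of `A` with `h(B) = h(A)`
there is an edge `B → A`. -/
def Regular (A : V) : Prop :=
  ∀ B : V, Anc A B → height B = height A → Nonempty (B ⟶ A)

/-- The clade of a vertex `A`: the full subquiver of descendants of `A`. -/
abbrev Clade (A : V) : Type u := {B : V // Anc A B}

instance (A : V) : Quiver (Clade A) := ⟨fun X Y => X.val ⟶ Y.val⟩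

section Append

variable {α : Type*} {A B : ℕ → α} {m : ℕ}

def evolAppend (A : ℕ → α) (m : ℕ) (B : ℕ → α) : ℕ → α :=
  fun j => if j ≤ m then A j else B (j - m)

lemma evolAppend_of_le {j : ℕ} (hj : j ≤ m) : evolAppend A m B j = A j :=
  if_pos hj

lemma evolAppend_add (h : A m = B 0) (j : ℕ) : evolAppend A m B (m + j) = B j := by
  rcases j with _ | j
  · exact (evolAppend_of_le le_rfl).trans h
  · simp [evolAppend]

end Append

section Evolutions

variable {A B : ℕ → V} {m n : ℕ} {X Y : V}

lemma IsEvol.append (hA : IsEvol A m) (hB : IsEvol B n) (h : A m = B 0) :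
    IsEvol (evolAppend A m B) (m + n) := by
  intro k hk
  rcases lt_or_ge k m with hkm | hmk
  · rw [evolAppend_of_le hkm, evolAppend_of_le hkm.le]
    exact hA k hkm
  · obtain ⟨j, rfl⟩ := Nat.exists_eq_add_of_le hmk
    rw [add_assoc, evolAppend_add h, evolAppend_add h]
    exact hB j (by omega)

lemma IsFullEvol.append (hA : IsFullEvol A m X) (hB : IsEvol B n) (h : B 0 = X) :
    IsFullEvol (evolAppend A m B) (m + n) (B n) := by
  refine ⟨hA.1.append hB (hA.2.2.trans h.symm), ?_, evolAppend_add (hA.2.2.trans h.symm) n⟩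
  rw [evolAppend_of_le (Nat.zero_le m)]
  exact hA.2.1

lemma IsFullEvol.prefix (hA : IsFullEvol A m X) {k : ℕ} (hk : k ≤ m) :
    IsFullEvol A k (A k) :=
  ⟨fun j hj => hA.1 j (by omega), hA.2.1, rfl⟩

lemma Anc.refl (X : V) : Anc X X :=
  ⟨0, fun _ => X, fun _ hk => absurd hk (Nat.not_lt_zero _), rfl, rfl⟩

lemma Anc.trans (hXY : Anc X Y) {Z : V} (hYZ : Anc Y Z) : Anc X Z := by
  obtain ⟨m, A, hA, rfl, rfl⟩ := hXY
  obtain ⟨n, B, hB, hB0, rfl⟩ := hYZ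
  refine ⟨m + n, evolAppend A m B, hA.append hB hB0.symm, evolAppend_of_le (Nat.zero_le m), ?_⟩
  exact evolAppend_add hB0.symm n

lemma Isotypic.refl (X : V) : Isotypic X X :=
  ⟨Anc.refl X, Anc.refl X⟩

lemma Isotypic.symm (h : Isotypic X Y) : Isotypic Y X :=
  ⟨h.2, h.1⟩

lemma Isotypic.trans (hXY : Isotypic X Y) {Z : V} (hYZ : Isotypic Y Z) : Isotypic X Z :=
  ⟨hXY.1.trans hYZ.1, hYZ.2.trans hXY.2⟩

end Evolutions

section Embeddings

lemma add_le_of_forall_lt_succ {r : ℕ → ℕ} {m : ℕ} (hr : ∀ k < m, r k < r (k + 1))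
    {i : ℕ} (d : ℕ) (hd : i + d ≤ m) : r i + d ≤ r (i + d) := by
  induction d with
  | zero => rfl
  | succ d ih =>
    have := hr (i + d) (by omega)
    have := ih (by omega)
    show r i + (d + 1) ≤ r (i + d + 1)
    omega

variable {A A' B : ℕ → V} {m n : ℕ}

lemma Embeds.congr_left (hAA' : ∀ k ≤ m, Isotypic (A k) (A' k)) (h : Embeds A m B n) :
    Embeds A' m B n := by
  obtain ⟨hmn, r, hr, hrm, hiso⟩ := h
  exact ⟨hmn, r, hr, hrm, fun k hk => (hAA' k hk).symm.trans (hiso k hk)⟩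

/-- An embedding into an evolution of the same length is the identity on indices. -/
lemma Embeds.isotypic_of_length_eq (h : Embeds A m B m) {k : ℕ} (hk : k ≤ m) :
    Isotypic (A k) (B k) := by
  obtain ⟨-, r, hr, hrm, hiso⟩ := h
  have hlow := add_le_of_forall_lt_succ hr k (by omega : 0 + k ≤ m)
  have hup := add_le_of_forall_lt_succ hr (m - k) (by omega : k + (m - k) ≤ m)
  rw [zero_add] at hlow
  rw [Nat.add_sub_cancel' hk] at hup
  have hrk : r k = k := by omega
  simpa [hrk] using hiso k hk

end Embeddings

section Height

variable {A : ℕ → V} {m n : ℕ} {X Y : V}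

lemma height_le_of_isFullEvol (h : IsFullEvol A m X) : height X ≤ m :=
  sInf_le ⟨m, rfl, A, h⟩

lemma exists_isFullEvol_height_eq (h : height X ≠ ⊤) :
    ∃ (m : ℕ) (A : ℕ → V), IsFullEvol A m X ∧ height X = m := by
  have hne : {n : ℕ∞ | ∃ m : ℕ, n = m ∧ ∃ A : ℕ → V, IsFullEvol A m X}.Nonempty := by
    by_contra hempty
    rw [Set.not_nonempty_iff_eq_empty] at hempty
    exact h (by rw [height, hempty, sInf_empty])
  obtain ⟨m, hm, A, hA⟩ := csInf_mem hne
  exact ⟨m, A, hA, hm⟩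

lemma height_le_height_add_one (e : Nonempty (X ⟶ Y)) : height X ≤ height Y + 1 := by
  rcases eq_or_ne (height Y) ⊤ with hY | hY
  · simp [hY]
  obtain ⟨m, A, hA, hm⟩ := exists_isFullEvol_height_eq hY
  have hedge : IsEvol (fun j => if j = 0 then Y else X) 1 := by
    intro k hk
    obtain rfl : k = 0 := by omega
    simpa using e
  have hfull := hA.append hedge rfl
  rw [hm]
  exact_mod_cast height_le_of_isFullEvol hfull

lemma IsEvol.height_le_add (hA : IsEvol A m) {i : ℕ} (d : ℕ) (hd : i + d ≤ m) :
    height (A (i + d)) ≤ height (A i) + d := by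
  induction d with
  | zero => simp
  | succ d ih =>
    calc height (A (i + d + 1)) ≤ height (A (i + d)) + 1 :=
          height_le_height_add_one (hA (i + d) (by omega))
      _ ≤ height (A i) + d + 1 := by gcongr; exact ih (by omega)
      _ = height (A i) + (d + 1 : ℕ) := by push_cast; ring

lemma IsFullEvol.height_apply_eq (hA : IsFullEvol A m X) (hX : height X = m) {k : ℕ}
    (hk : k ≤ m) : height (A k) = k := by
  have hle : height (A k) ≤ k := height_le_of_isFullEvol (hA.prefix hk)
  obtain ⟨a, ha⟩ := ENat.ne_top_iff_exists.mp (ne_top_of_le_ne_top (ENat.natCast_ne_top k) hle)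
  have hm := hA.1.height_le_add (i := k) (m - k) (by omega)
  rw [Nat.add_sub_cancel' hk, hA.2.2, hX, ← ha] at hm
  rw [← ha] at hle ⊢
  have : m ≤ a + (m - k) := by exact_mod_cast hm
  have : a ≤ k := by exact_mod_cast hle
  exact_mod_cast (by omega : a = k)

lemma IsUniversalEvol.height_eq (h : IsUniversalEvol A m X) : height X = m := by
  have hX : height X ≠ ⊤ :=
    ne_top_of_le_ne_top (ENat.natCast_ne_top m) (height_le_of_isFullEvol h.1)
  obtain ⟨n, B, hB, hn⟩ := exists_isFullEvol_height_eq hX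
  have hmn : m ≤ n := (h.2 B n hB).1
  exact le_antisymm (height_le_of_isFullEvol h.1) (hn ▸ by exact_mod_cast hmn)

end Height

section Monotonous

variable {A : ℕ → V} {m : ℕ} {X Y : V}

lemma Monotonous.height_mono (hmon : Monotonous V) (hA : IsEvol A m) {i j : ℕ} (hij : i ≤ j)
    (hjm : j ≤ m) : height (A i) ≤ height (A j) := by
  induction j, hij using Nat.le_induction with
  | base => exact le_rfl
  | succ j _ ih => exact (ih (by omega)).trans (hmon _ _ (hA j (by omega)))

lemma Monotonous.lt_of_height_lt (hmon : Monotonous V) (hA : IsEvol A m) {i j : ℕ}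
    (him : i ≤ m) (h : height (A i) < height (A j)) : i < j := by
  by_contra! hji
  exact (hmon.height_mono hA hji him).not_gt h

lemma Monotonous.height_le_of_anc (hmon : Monotonous V) (h : Anc X Y) : height X ≤ height Y := by
  obtain ⟨m, A, hA, rfl, rfl⟩ := h
  exact hmon.height_mono hA (Nat.zero_le m) le_rfl

lemma Monotonous.height_eq_of_isotypic (hmon : Monotonous V) (h : Isotypic X Y) :
    height X = height Y :=
  le_antisymm (hmon.height_le_of_anc h.1) (hmon.height_le_of_anc h.2)

end Monotonous

lemma Monotonous.embeds_of_isUniversalEvol_of_anc (hmon : Monotonous V) {U : ℕ → V} {n : ℕ}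
    {A B : V} (hU : IsUniversalEvol U n B) (hAB : Anc A B) {h : ℕ} (hA : height A = h)
    {E : ℕ → V} {q : ℕ} (hE : IsFullEvol E q A) :
    Embeds (fun k => if k < h then U k else A) h E q := by
  obtain ⟨p, C, hC, hC0, hCp⟩ := hAB
  have hF := hE.append hC hC0
  rw [hCp] at hF
  obtain ⟨-, s, hs, hsn, hiso⟩ := hU.2 _ _ hF
  have hhn : h ≤ n := by
    have := hmon.height_le_of_anc ⟨p, C, hC, hC0, hCp⟩
    rwa [hA, hU.height_eq, Nat.cast_le] at this
  have hsq : ∀ k < h, s k < q := by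
    intro k hk
    have hsk := add_le_of_forall_lt_succ hs (i := k) (n - k) (by omega)
    rw [Nat.add_sub_cancel' (by omega)] at hsk
    refine hmon.lt_of_height_lt hF.1 (by omega) ?_
    rw [← hmon.height_eq_of_isotypic (hiso k (by omega)),
      hU.1.height_apply_eq hU.height_eq (by omega), evolAppend_of_le le_rfl, hE.2.2, hA]
    exact_mod_cast hk
  refine ⟨by exact_mod_cast hA ▸ height_le_of_isFullEvol hE,
    fun k => if k < h then s k else q, fun k hk => ?_, by simp, fun k hk => ?_⟩
  · by_cases hk1 : k + 1 < h
    · simpa [hk, hk1] using hs k (by omega)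
    · simpa [hk, hk1] using hsq k hk
  · by_cases hkh : k < h
    · simpa [hkh, evolAppend_of_le (hsq k hkh).le] using hiso k (by omega)
    · simpa [hkh, hE.2.2] using Isotypic.refl A

theorem stmt_13 (hmon : Monotonous V) (A B : V) (hB : Phylogenetic B) (hAB : Anc A B) :
    Phylogenetic A := by
  obtain ⟨U, n, hU⟩ := hB
  have hA : height A ≠ ⊤ := ne_top_of_le_ne_top (hU.height_eq ▸ ENat.natCast_ne_top n)
    (hmon.height_le_of_anc hAB)
  obtain ⟨h, T, hT, hTh⟩ := exists_isFullEvol_height_eq hA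
  have hTW : ∀ k ≤ h, Isotypic (if k < h then U k else A) (T k) :=
    fun k => (hmon.embeds_of_isUniversalEvol_of_anc hU hAB hTh hT).isotypic_of_length_eq
  exact ⟨T, h, hT, fun E q hE =>
    (hmon.embeds_of_isUniversalEvol_of_anc hU hAB hTh hE).congr_left hTW⟩
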